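/- Let g_n denote the number of UD-equivalence classes of paths of length n in ℰ. Then g_0 = 1, g_1 = 0, g_2 = 1, g_3 = 1, g_4 = 3, and g_n = 2g_{n−1} + g_{n−2} − 3g_{n−3} + g_{n−5} for all n ≥ 5. -/

import Mathlib

/-- Steps of a Dyck path with catastrophes: up-step `U`, down-step `D`,
and catastrophe step `C k` of size `k` (valid paths only use `k ≥ 2`). -/
inductive Step where
  | U : Step
  | D : Step
  | C : ℕ → Step
  deriving DecidableEq

/-- The vertical displacement of a step. -/
def Step.val : Step → ℤ
  | .U => 1
  | .D => -1
  | .C k => -(k : ℤ)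

/-- The height (ordinate) of the path after its first `i` steps. -/
def hgt (P : List Step) (i : ℕ) : ℤ := ((P.take i).map Step.val).sum

/-- `InE P` means `P` is a Dyck path with catastrophes (a member of ℰ):
it stays at height ≥ 0, ends on the x-axis, and every catastrophe step
`C k` has `k ≥ 2` and starts at height `k` (hence ends on the x-axis). -/
def InE (P : List Step) : Prop :=
  (∀ i, 0 ≤ hgt P i) ∧ hgt P P.length = 0 ∧
    ∀ i k, P[i]? = some (Step.C k) → 2 ≤ k ∧ hgt P i = (k : ℤ)

/-- `(UD)^k`. -/
def UDpow (k : ℕ) : List Step := (List.replicate k [Step.U, Step.D]).flatten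

/-- `(DU)^k`. -/
def DUpow (k : ℕ) : List Step := (List.replicate k [Step.D, Step.U]).flatten

/-- `U^k`. -/
def Upow (k : ℕ) : List Step := List.replicate k Step.U

/-- `C_s` with the convention `C_1 = D`. -/
def cfin (s : ℕ) : Step := if s = 1 then Step.D else Step.C s

/-- Test whether a step is a catastrophe step. -/
def isCatB : Step → Bool
  | .C _ => true
  | _ => false

/-- The number of catastrophe steps in a path. -/
def catCount (P : List Step) : ℕ := P.countP isCatB

/-- The number of equivalence classes, for the equivalence `E`, of paths of
length `n` in ℰ. -/
noncomputable def nClasses (E : List Step → List Step → Prop) (n : ℕ) : ℕ :=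
  Nat.card (Quot (fun P Q : {P : List Step // InE P ∧ P.length = n} => E P.1 Q.1))

/-- Two paths are `UD`-equivalent when the occurrences of the pattern `UD`
appear at the same positions in both paths. -/
def UDEquiv (P Q : List Step) : Prop :=
  ∀ i : ℕ, (P[i]? = some Step.U ∧ P[i + 1]? = some Step.D) ↔
    (Q[i]? = some Step.U ∧ Q[i + 1]? = some Step.D)

/-!
Read a path as a tiling of `[0, n)` by dominoes (`true`, an occurrence of `UD`) and monomers
(`false`, any other step). The `UD`-occurrence vector is the expansion of the tiling, so
`UD`-classes of paths correspond to the tilings that some path of ℰ realizes. Since a domino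
changes no height, a tiling is realized exactly when it does not have a single monomer (one step
cannot return to the axis) and does not have exactly two adjacent monomers (they would have to
be `U D`, a domino). All others are realized by `U, …, U, C_{m-1}` on the `m` monomers
(with `C_1 = D`).
Of the `F (n+1)` tilings of length `n`, `⌊(n+1)/2⌋` are excluded, so
`g n = F (n+1) - ⌊(n+1)/2⌋`, and the recurrence is the one annihilated by
`(x² - x - 1)(x - 1)²(x + 1)`.
-/

def udVector (P : List Step) : List Bool :=
  (List.range P.length).map fun i => decide (P[i]? = some .U ∧ P[i + 1]? = some .D)

@[simp] theorem length_udVector (P : List Step) : (udVector P).length = P.length := by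
  simp [udVector]

theorem udVector_cons (s : Step) (P : List Step) :
    udVector (s :: P) = decide (s = .U ∧ P.head? = some .D) :: udVector P := by
  simp [udVector, List.range_succ_eq_map, List.head?_eq_getElem?]

theorem udEquiv_iff_udVector_eq {P Q : List Step} (h : P.length = Q.length) :
    UDEquiv P Q ↔ udVector P = udVector Q := by
  simp only [udVector, h, List.map_inj_left, List.mem_range, decide_eq_decide, UDEquiv]
  refine ⟨fun H i _ => H i, fun H i => ?_⟩
  by_cases hi : i < Q.length
  · exact H i hi
  · simp [List.getElem?_eq_none (by omega : P.length ≤ i),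
      List.getElem?_eq_none (by omega : Q.length ≤ i)]

def expand : List Bool → List Bool
  | [] => []
  | false :: w => false :: expand w
  | true :: w => true :: false :: expand w

theorem expand_injective : Function.Injective expand := by
  intro v w h
  induction v generalizing w with
  | nil => cases w with
    | nil => rfl
    | cons b w => cases b <;> simp [expand] at h
  | cons a v ih => cases w with
    | nil => cases a <;> simp [expand] at h
    | cons b w =>
      cases a <;> cases b <;>
        simp only [expand, List.cons.injEq, reduceCtorEq, true_and, false_and] at h ⊢ <;>
        exact ih h

def tiling : List Step → List Bool
  | [] => []
  | .U :: .D :: P => true :: tiling P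
  | _ :: P => false :: tiling P

theorem expand_tiling (P : List Step) : expand (tiling P) = udVector P := by
  induction P using tiling.induct with
  | case1 => rfl
  | case2 P ih => simp [tiling, expand, udVector_cons, ih]
  | case3 s P hs ih =>
    rw [tiling.eq_3 s P hs, udVector_cons, expand, ih]
    cases P with
    | nil => simp
    | cons t P => simpa using fun hU => hs P hU

theorem length_expand_tiling (P : List Step) : (expand (tiling P)).length = P.length := by
  rw [expand_tiling, length_udVector]

theorem udEquiv_iff_tiling_eq {P Q : List Step} (h : P.length = Q.length) :
    UDEquiv P Q ↔ tiling P = tiling Q := by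
  rw [udEquiv_iff_udVector_eq h, ← expand_tiling, ← expand_tiling, expand_injective.eq_iff]

theorem exists_of_tiling_eq_false_cons {P : List Step} {w : List Bool} (h : tiling P = false :: w) :
    ∃ s P', P = s :: P' ∧ ¬(s = .U ∧ P'.head? = some .D) ∧ tiling P' = w := by
  induction P using tiling.induct with
  | case1 => simp [tiling] at h
  | case2 P _ => simp [tiling] at h
  | case3 s P hs _ =>
    rw [tiling.eq_3 s P hs, List.cons.injEq] at h
    refine ⟨s, P, rfl, ?_, h.2⟩
    rintro ⟨hU, hD⟩
    cases P with
    | nil => simp at hD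
    | cons t P' => exact hs P' hU (by simp_all)

def tilings : ℕ → Finset (List Bool)
  | 0 => {[]}
  | 1 => {[false]}
  | n + 2 => (tilings (n + 1)).image (false :: ·) ∪ (tilings n).image (true :: ·)

theorem mem_tilings {n : ℕ} {w : List Bool} : w ∈ tilings n ↔ (expand w).length = n := by
  induction n using tilings.induct generalizing w with
  | case1 => cases w with
    | nil => simp [tilings, expand]
    | cons a w => cases a <;> simp [tilings, expand]
  | case2 =>
    rcases w with _ | ⟨_ | _, _ | ⟨_ | _, w⟩⟩ <;> simp [tilings, expand]
  | case3 n ih₁ ih₂ =>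
    rcases w with _ | ⟨_ | _, w⟩ <;> simp [tilings, expand, ih₁, ih₂]

def ValidFrom (h : ℤ) (P : List Step) : Prop :=
  (∀ i, 0 ≤ h + hgt P i) ∧ h + hgt P P.length = 0 ∧
    ∀ i (k : ℕ), P[i]? = some (.C k) → 2 ≤ k ∧ h + hgt P i = k

theorem inE_iff_validFrom_zero (P : List Step) : InE P ↔ ValidFrom 0 P := by
  simp [InE, ValidFrom]

@[simp] theorem validFrom_nil {h : ℤ} : ValidFrom h [] ↔ h = 0 := by
  simp only [ValidFrom, hgt, List.take_nil, List.map_nil, List.sum_nil, add_zero,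
    List.getElem?_nil, reduceCtorEq, false_implies, implies_true, and_true]
  exact ⟨fun h' => h'.2, fun h' => ⟨fun _ => h'.ge, h'⟩⟩

theorem validFrom_cons {h : ℤ} {s : Step} {P : List Step} :
    ValidFrom h (s :: P) ↔
      0 ≤ h ∧ (∀ k, s = .C k → 2 ≤ k ∧ h = k) ∧ ValidFrom (h + s.val) P := by
  have hgt_succ (i : ℕ) : h + hgt (s :: P) (i + 1) = h + s.val + hgt P i := by
    simp [hgt, add_assoc]
  simp only [ValidFrom, List.length_cons, hgt_succ]
  constructor
  · rintro ⟨hnn, hend, hcat⟩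
    exact ⟨by simpa [hgt] using hnn 0, fun k hk => by simpa [hk, hgt] using hcat 0 k,
      fun i => hgt_succ i ▸ hnn (i + 1), hend, fun i k hk => hgt_succ i ▸ hcat (i + 1) k hk⟩
  · rintro ⟨h0, hs, hnn, hend, hcat⟩
    refine ⟨fun i => ?_, hend, fun i k hk => ?_⟩
    · cases i with
      | zero => simpa [hgt] using h0
      | succ i => exact hgt_succ i ▸ hnn i
    · cases i with
      | zero => simpa [hgt] using hs k (by simpa using hk)
      | succ i => exact hgt_succ i ▸ hcat i k hk

@[simp] theorem validFrom_U_D {h : ℤ} {P : List Step} :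
    ValidFrom h (.U :: .D :: P) ↔ 0 ≤ h ∧ ValidFrom h P := by
  simp only [validFrom_cons, Step.val, reduceCtorEq, false_implies, implies_true, true_and,
    add_neg_cancel_right]
  constructor
  · rintro ⟨h0, -, hP⟩; exact ⟨h0, hP⟩
  · rintro ⟨h0, hP⟩; exact ⟨h0, by omega, hP⟩

/-- The tilings realized by valid paths from height `h`, see `exists_validFrom_tiling_eq_iff`. -/
def Admissible (h : ℤ) (w : List Bool) : Prop :=
  (w.count false = 0 → h = 0) ∧ (w.count false = 1 → 1 ≤ h) ∧
    (w.count false = 2 → h = 0 → ¬[false, false] <:+: w)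

instance (h : ℤ) : DecidablePred (Admissible h) := fun _ => by
  unfold Admissible; infer_instance

theorem two_le_count_false_of_infix {w : List Bool} (hw : [false, false] <:+: w) :
    2 ≤ w.count false := by
  simpa using hw.count_le false

@[simp] theorem admissible_true_cons {h : ℤ} {w : List Bool} :
    Admissible h (true :: w) ↔ Admissible h w := by
  simp [Admissible, List.infix_cons_iff]

theorem ValidFrom.eq_zero_of_count_false_eq_zero {h : ℤ} {P : List Step} (hP : ValidFrom h P)
    (hw : (tiling P).count false = 0) : h = 0 := by
  induction P using tiling.induct with
  | case1 => exact validFrom_nil.1 hP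
  | case2 P ih => exact ih (validFrom_U_D.1 hP).2 (by simpa [tiling] using hw)
  | case3 s P hs _ => simp [tiling.eq_3 s P hs] at hw

theorem ValidFrom.head?_eq_D {P : List Step} {w : List Bool} (hP : ValidFrom 1 P)
    (hPw : tiling P = false :: w) (hw : w.count false = 0) : P.head? = some .D := by
  obtain ⟨t, P', rfl, -, rfl⟩ := exists_of_tiling_eq_false_cons hPw
  obtain ⟨-, ht, hP'⟩ := validFrom_cons.1 hP
  have := hP'.eq_zero_of_count_false_eq_zero hw
  cases t with
  | U => simp [Step.val] at this
  | D => rfl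
  | C k => have := ht k rfl; omega

theorem ValidFrom.admissible_tiling {h : ℤ} {P : List Step} (hP : ValidFrom h P) :
    Admissible h (tiling P) := by
  induction P using tiling.induct generalizing h with
  | case1 => simp [Admissible, tiling, validFrom_nil.1 hP]
  | case2 P ih => simpa [tiling] using ih (validFrom_U_D.1 hP).2
  | case3 s P hs ih =>
    obtain ⟨h0, hcat, hP'⟩ := validFrom_cons.1 hP
    obtain ⟨ih0, -, -⟩ := ih hP'
    rw [tiling.eq_3 s P hs]
    refine ⟨by simp, fun hc => ?_, fun hc hh => ?_⟩
    · have := ih0 (by simpa using hc)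
      cases s with
      | U => simp [Step.val] at this; omega
      | D => simp [Step.val] at this; omega
      | C k => have := hcat k rfl; omega
    · subst hh
      have hU : s = .U := by
        cases s with
        | U => rfl
        | D => simpa [Step.val, hgt] using hP'.1 0
        | C k => have := hcat k rfl; omega
      subst hU
      rw [List.infix_cons_iff]
      rintro (hpre | hinf)
      · obtain ⟨v, hv⟩ := hpre
        have hPv : tiling P = false :: v := by simpa using hv.symm
        have hD := ValidFrom.head?_eq_D (by simpa [Step.val] using hP') hPv
          (by simpa [hPv] using hc)
        cases P with
        | nil => simp at hD
        | cons t P => exact hs P rfl (by simp_all)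
      · have := two_le_count_false_of_infix hinf
        simp only [List.count_cons_self] at hc
        omega

/-- `h` counts the monomers placed so far, all of them `U`; the last monomer is `C_h`. -/
def buildPath : List Bool → ℕ → List Step
  | [], _ => []
  | true :: w, h => .U :: .D :: buildPath w h
  | false :: w, h =>
    if w.count false = 0 then cfin h :: buildPath w 0 else .U :: buildPath w (h + 1)

@[simp] theorem val_cfin (h : ℕ) : (cfin h).val = -h := by
  unfold cfin; split <;> simp_all [Step.val]

theorem admissible_zero_of_count_false_eq_zero {w : List Bool} (hw : w.count false = 0) :
    Admissible 0 w := by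
  simp [Admissible, hw]

theorem admissible_succ_of_count_false_ne_zero (h : ℕ) {w : List Bool}
    (hc : w.count false ≠ 0) : Admissible (h + 1 : ℕ) w :=
  ⟨fun h0 => absurd h0 hc, fun _ => by omega, fun _ h0 => by omega⟩

theorem validFrom_buildPath {h : ℕ} {w : List Bool} (hw : Admissible h w) :
    ValidFrom h (buildPath w h) := by
  induction w generalizing h with
  | nil => simpa [buildPath] using hw.1 rfl
  | cons a w ih =>
    cases a with
    | true => simpa [buildPath] using ih (admissible_true_cons.1 hw)
    | false =>
      by_cases hc : w.count false = 0
      · have h1 : 1 ≤ h := by exact_mod_cast hw.2.1 (by simpa using hc)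
        simp only [buildPath, hc, if_true, validFrom_cons, val_cfin, add_neg_cancel]
        refine ⟨by positivity, fun k hk => ?_, ih (admissible_zero_of_count_false_eq_zero hc)⟩
        unfold cfin at hk
        split at hk
        · simp at hk
        · cases hk; exact ⟨by omega, rfl⟩
      · simp only [buildPath, hc, if_false, validFrom_cons]
        refine ⟨by positivity, by simp, ?_⟩
        simpa [Step.val] using ih (admissible_succ_of_count_false_ne_zero h hc)

theorem head?_buildPath_ne_D {h : ℕ} {w : List Bool} (hw : Admissible h (false :: w))
    (hc : w.count false ≠ 0) : (buildPath w (h + 1)).head? ≠ some .D := by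
  rcases w with _ | ⟨_ | _, v⟩
  · simp [buildPath]
  · by_cases hv : v.count false = 0
    · have : h ≠ 0 := by
        rintro rfl
        exact hw.2.2 (by simp [hv]) rfl (List.infix_cons_iff.2 (Or.inl (by simp)))
      simp [buildPath, hv, cfin, this]
    · simp [buildPath, hv]
  · simp [buildPath]

theorem tiling_buildPath {h : ℕ} {w : List Bool} (hw : Admissible h w) :
    tiling (buildPath w h) = w := by
  induction w generalizing h with
  | nil => rfl
  | cons a w ih =>
    cases a with
    | true => simpa [buildPath, tiling] using ih (admissible_true_cons.1 hw)
    | false =>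
      by_cases hc : w.count false = 0
      · have hne : cfin h ≠ .U := by unfold cfin; split <;> simp
        simp only [buildPath, hc, if_true]
        rw [tiling.eq_3 _ _ (fun _ hU _ => hne hU),
          ih (admissible_zero_of_count_false_eq_zero hc)]
      · simp only [buildPath, hc, if_false]
        rw [tiling.eq_3 _ _ (fun P _ hP => head?_buildPath_ne_D hw hc (by simp [hP])),
          ih (admissible_succ_of_count_false_ne_zero h hc)]

theorem exists_validFrom_tiling_eq_iff (h : ℕ) (w : List Bool) :
    (∃ P, ValidFrom h P ∧ tiling P = w) ↔ Admissible h w :=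
  ⟨fun ⟨_, hP, hPw⟩ => hPw ▸ hP.admissible_tiling,
    fun hw => ⟨_, validFrom_buildPath hw, tiling_buildPath hw⟩⟩

theorem Nat.card_quot_eq_card_range {α β : Type*} {r : α → α → Prop} {f : α → β}
    (hr : ∀ a b, r a b ↔ f a = f b) : Nat.card (Quot r) = Nat.card (Set.range f) := by
  obtain rfl : r = (Setoid.ker f).r := funext₂ fun a b => propext (hr a b)
  exact Nat.card_congr (Setoid.quotientKerEquivRange f)

theorem range_tiling_inE (n : ℕ) :
    Set.range (fun P : {P : List Step // InE P ∧ P.length = n} => tiling P.1) =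
      ↑((tilings n).filter (Admissible 0)) := by
  ext w
  simp only [Set.mem_range, Finset.coe_filter, Set.mem_ofPred_eq, mem_tilings]
  constructor
  · rintro ⟨⟨P, hP, rfl⟩, rfl⟩
    exact ⟨length_expand_tiling P, ((inE_iff_validFrom_zero P).1 hP).admissible_tiling⟩
  · rintro ⟨hn, hw⟩
    obtain ⟨P, hP, rfl⟩ := (exists_validFrom_tiling_eq_iff 0 w).2 hw
    refine ⟨⟨P, (inE_iff_validFrom_zero P).2 hP, ?_⟩, rfl⟩
    rw [← length_expand_tiling, hn]

theorem nClasses_UDEquiv (n : ℕ) :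
    nClasses UDEquiv n = ((tilings n).filter (Admissible 0)).card := by
  refine (Nat.card_quot_eq_card_range
    (f := fun P : {P : List Step // InE P ∧ P.length = n} => tiling P.1)
    fun P Q => udEquiv_iff_tiling_eq (P.2.2.trans Q.2.2.symm)).trans ?_
  rw [range_tiling_inE, Nat.card_coe_set_eq, Set.ncard_coe_finset]

theorem card_filter_tilings_add_two (p : List Bool → Prop) [DecidablePred p] (n : ℕ) :
    ((tilings (n + 2)).filter p).card =
      ((tilings (n + 1)).filter fun w => p (false :: w)).card +
        ((tilings n).filter fun w => p (true :: w)).card := by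
  have hdisj :
      Disjoint ((tilings (n + 1)).image (false :: ·)) ((tilings n).image (true :: ·)) := by
    simp [Finset.disjoint_left]
  rw [tilings, Finset.filter_union, Finset.card_union_of_disjoint
    (Finset.disjoint_filter_filter hdisj), Finset.filter_image, Finset.filter_image,
    Finset.card_image_of_injective _ List.cons_injective,
    Finset.card_image_of_injective _ List.cons_injective]

theorem card_tilings : ∀ n, (tilings n).card = Nat.fib (n + 1)
  | 0 => rfl
  | 1 => rfl
  | n + 2 => by
    have := card_filter_tilings_add_two (fun _ => True) n
    simp only [Finset.filter_true] at this
    rw [this, card_tilings n, card_tilings (n + 1), add_comm]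
    exact (Nat.fib_add_two (n := n + 1)).symm

theorem card_filter_count_false_eq_zero_add_succ : ∀ n,
    ((tilings n).filter fun w => w.count false = 0).card +
      ((tilings (n + 1)).filter fun w => w.count false = 0).card = 1
  | 0 => rfl
  | n + 1 => by
    rw [card_filter_tilings_add_two]
    simp only [List.count_cons_self, List.count_cons_of_ne (by decide : true ≠ false),
      Nat.add_one_ne_zero, Finset.filter_false, Finset.card_empty, zero_add]
    rw [add_comm]
    exact card_filter_count_false_eq_zero_add_succ n

theorem not_admissible_zero_iff {w : List Bool} :
    ¬Admissible 0 w ↔ w.count false = 1 ∨ (w.count false = 2 ∧ [false, false] <:+: w) := by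
  simp only [Admissible, implies_true, Int.reduceLE, imp_false, forall_const, true_and, not_and,
    Classical.not_imp, Decidable.not_not]
  tauto

theorem not_admissible_zero_false_false_cons {w : List Bool} :
    ¬Admissible 0 (false :: false :: w) ↔ w.count false = 0 := by
  simp [not_admissible_zero_iff, List.infix_cons_iff]

theorem not_admissible_zero_false_true_cons {w : List Bool} :
    ¬Admissible 0 (false :: true :: w) ↔ w.count false = 0 := by
  simpa [not_admissible_zero_iff, List.infix_cons_iff] using
    fun hc hinf => absurd (two_le_count_false_of_infix hinf) (by omega)

theorem card_filter_not_admissible_false_cons : ∀ n,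
    ((tilings (n + 1)).filter fun w => ¬Admissible 0 (false :: w)).card = 1
  | 0 => rfl
  | n + 1 => by
    rw [card_filter_tilings_add_two]
    simp only [not_admissible_zero_false_false_cons, not_admissible_zero_false_true_cons]
    rw [add_comm]
    exact card_filter_count_false_eq_zero_add_succ n

theorem card_filter_not_admissible : ∀ n,
    ((tilings n).filter fun w => ¬Admissible 0 w).card = (n + 1) / 2
  | 0 => rfl
  | 1 => rfl
  | n + 2 => by
    simp only [card_filter_tilings_add_two, card_filter_not_admissible_false_cons,
      admissible_true_cons, card_filter_not_admissible n]
    omega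

theorem card_filter_admissible_add (n : ℕ) :
    ((tilings n).filter (Admissible 0)).card + (n + 1) / 2 = Nat.fib (n + 1) := by
  rw [← card_filter_not_admissible, Finset.card_filter_add_card_filter_not, card_tilings]

theorem nClasses_UDEquiv_eq_fib_sub (n : ℕ) :
    (nClasses UDEquiv n : ℤ) = Nat.fib (n + 1) - ((n + 1) / 2 : ℕ) := by
  rw [← card_filter_admissible_add, nClasses_UDEquiv]
  push_cast
  ring

/-- The number `g n` of UD-equivalence classes of paths of length `n` in ℰ
satisfies `g 0 = 1`, `g 1 = 0`, `g 2 = 1`, `g 3 = 1`, `g 4 = 3` and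
`g n = 2 g(n-1) + g(n-2) - 3 g(n-3) + g(n-5)` for `n ≥ 5`. -/
theorem count_UDEquiv_classes :
    nClasses UDEquiv 0 = 1 ∧ nClasses UDEquiv 1 = 0 ∧ nClasses UDEquiv 2 = 1 ∧
    nClasses UDEquiv 3 = 1 ∧ nClasses UDEquiv 4 = 3 ∧
    ∀ n, 5 ≤ n → (nClasses UDEquiv n : ℤ) =
      2 * nClasses UDEquiv (n - 1) + nClasses UDEquiv (n - 2)
        - 3 * nClasses UDEquiv (n - 3) + nClasses UDEquiv (n - 5) := by
  refine ⟨?_, ?_, ?_, ?_, ?_, fun n hn => ?_⟩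
  iterate 5 · zify; rw [nClasses_UDEquiv_eq_fib_sub]; norm_num
  obtain ⟨m, rfl⟩ := Nat.exists_eq_add_of_le' hn
  have h₃ : Nat.fib (m + 3) = Nat.fib (m + 1) + Nat.fib (m + 2) := Nat.fib_add_two
  have h₄ : Nat.fib (m + 4) = Nat.fib (m + 2) + Nat.fib (m + 3) := Nat.fib_add_two
  have h₅ : Nat.fib (m + 5) = Nat.fib (m + 3) + Nat.fib (m + 4) := Nat.fib_add_two
  have h₆ : Nat.fib (m + 6) = Nat.fib (m + 4) + Nat.fib (m + 5) := Nat.fib_add_two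
  simp only [nClasses_UDEquiv_eq_fib_sub, show m + 5 - 1 = m + 4 by omega,
    show m + 5 - 2 = m + 3 by omega, show m + 5 - 3 = m + 2 by omega, Nat.add_sub_cancel,
    add_assoc, Nat.reduceAdd]
  omega
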